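/- arXiv:math/9804093 — 4 statements merged into one kernel-verified Lean document; each statement's English description precedes it below -/
import Mathlib

section
/- Let X be a complex Banach space and K ⊆ X. Then K is compact if and only if K is closed and there exists a sequence (xₙ) in X with xₙ → 0 such that K is contained in the closure of the convex hull of the set {xₙ : n ∈ ℕ}. -/
/-!
If `K` is compact, approximate each `z ∈ K` by points `uₙ z` of finite `R 4⁻ⁿ`-nets of `K`, with
`u₀ z = 0`. Then `z = ∑ₙ 2⁻⁽ⁿ⁺¹⁾ • 2ⁿ⁺¹ • (uₙ₊₁ z - uₙ z)`; for each `n` the vectors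
`2ⁿ⁺¹ • (uₙ₊₁ z - uₙ z)` range over a finite set and have norm `O(2⁻ⁿ)`, so together with `0` they
can be enumerated as a null sequence, and the partial sums, whose weights add up to less than `1`,
lie in the convex hull of its terms. Conversely, a convergent sequence together with its limit is
compact, and the closed convex hull of a totally bounded set in a complete locally convex space is
compact.
-/

open Filter

open Set Function Metric Topology

lemma Filter.Tendsto.exists_seq_tendsto_insert_range_subset {ι X : Type*} [Countable ι]
    [TopologicalSpace X] {f : ι → X} {a : X} (hf : Tendsto f cofinite (𝓝 a)) :
    ∃ x : ℕ → X, Tendsto x atTop (𝓝 a) ∧ insert a (range f) ⊆ range x := by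
  obtain ⟨e, he⟩ := Countable.exists_injective_nat ι
  -- shifting `e` by one keeps the index `0` free for `a`
  have he' : Injective (fun i ↦ e i + 1) := fun i j h ↦ he (Nat.succ_injective h)
  refine ⟨extend (fun i ↦ e i + 1) f fun _ ↦ a, ?_, ?_⟩
  · rw [← Nat.cofinite_eq_atTop]
    intro U hU
    refine ((hf hU).image (fun i ↦ e i + 1)).subset fun n hn ↦ ?_
    by_cases hne : ∃ i, e i + 1 = n
    · obtain ⟨i, rfl⟩ := hne
      exact ⟨i, by simpa [he'.extend_apply] using hn, rfl⟩
    · exact absurd (by rw [mem_preimage, extend_apply' _ _ _ hne]; exact mem_of_mem_nhds hU) hn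
  · rintro _ (rfl | ⟨i, rfl⟩)
    · exact ⟨0, extend_apply' _ _ _ fun ⟨i, hi⟩ ↦ Nat.succ_ne_zero _ hi⟩
    · exact ⟨e i + 1, he'.extend_apply _ _ _⟩

lemma tendsto_val_iUnion_cofinite {X : Type*} [TopologicalSpace X] {W : ℕ → Set X} {a : X}
    (hW : ∀ n, (W n).Finite) (hlim : Tendsto W atTop (𝓝 a).smallSets) :
    Tendsto ((↑) : (⋃ n, W n) → X) cofinite (𝓝 a) := by
  intro U hU
  obtain ⟨N, hN⟩ := eventually_atTop.1 (tendsto_smallSets_iff.1 hlim U hU)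
  refine Finite.of_finite_image (f := ((↑) : (⋃ n, W n) → X)) ?_ Subtype.val_injective.injOn
  refine ((finite_lt_nat N).biUnion fun n _ ↦ hW n).subset ?_
  rintro _ ⟨⟨z, hz⟩, hzU, rfl⟩
  obtain ⟨n, hn⟩ := mem_iUnion.1 hz
  exact mem_biUnion (not_le.1 fun h ↦ hzU (hN n h hn)) hn

lemma exists_seq_tendsto_insert_iUnion_subset_range {X : Type*} [TopologicalSpace X]
    {W : ℕ → Set X} {a : X} (hW : ∀ n, (W n).Finite) (hlim : Tendsto W atTop (𝓝 a).smallSets) :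
    ∃ x : ℕ → X, Tendsto x atTop (𝓝 a) ∧ insert a (⋃ n, W n) ⊆ range x := by
  have : Countable (⋃ n, W n) :=
    (countable_iUnion fun n ↦ (hW n).countable).to_subtype
  simpa only [Subtype.range_coe] using
    (tendsto_val_iUnion_cofinite hW hlim).exists_seq_tendsto_insert_range_subset

lemma sum_smul_mem_convexHull_of_sum_le_one {R E ι : Type*} [Field R] [LinearOrder R]
    [IsStrictOrderedRing R] [AddCommGroup E] [Module R E] {s : Set E} (h0 : 0 ∈ s)
    {t : Finset ι} {c : ι → R} {v : ι → E} (hc : ∀ i ∈ t, 0 ≤ c i)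
    (hc1 : ∑ i ∈ t, c i ≤ 1) (hv : ∀ i ∈ t, v i ∈ s) :
    ∑ i ∈ t, c i • v i ∈ convexHull R s := by
  rcases (Finset.sum_nonneg hc).eq_or_lt with hσ | hσ
  · have hc0 := (Finset.sum_eq_zero_iff_of_nonneg hc).1 hσ.symm
    rw [Finset.sum_eq_zero fun i hi ↦ by rw [hc0 i hi, zero_smul]]
    exact subset_convexHull R s h0
  · rw [← smul_inv_smul₀ hσ.ne' (∑ i ∈ t, c i • v i)]
    exact ((convex_convexHull R s).starConvex (subset_convexHull R s h0)).smul_mem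
      (t.centerMass_mem_convexHull hc hσ hv) hσ.le hc1

lemma mem_closure_convexHull_of_tendsto {E : Type*} [SeminormedAddCommGroup E] [NormedSpace ℝ E]
    {S : Set E} (h0 : 0 ∈ S) {u : ℕ → E} {z : E} (hu : Tendsto u atTop (𝓝 z)) (hu0 : u 0 = 0)
    (hS : ∀ n, (2 : ℝ) ^ (n + 1) • (u (n + 1) - u n) ∈ S) :
    z ∈ closure (convexHull ℝ S) := by
  refine mem_closure_of_tendsto hu (Eventually.of_forall fun N ↦ ?_)
  have htelescope :
      u N = ∑ n ∈ Finset.range N, (2⁻¹ : ℝ) ^ (n + 1) • (2 : ℝ) ^ (n + 1) • (u (n + 1) - u n) := by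
    simp_rw [smul_smul, ← mul_pow, inv_mul_cancel₀ (two_ne_zero' ℝ), one_pow, one_smul,
      Finset.sum_range_sub, hu0, sub_zero]
  have hweights : ∑ n ∈ Finset.range N, (2⁻¹ : ℝ) ^ (n + 1) ≤ 1 := by
    have := sum_geometric_two_le N
    simp_rw [pow_succ, ← Finset.sum_mul]
    norm_num at this ⊢
    linarith
  rw [htelescope]
  exact sum_smul_mem_convexHull_of_sum_le_one h0 (fun n _ ↦ by positivity) hweights
    fun n _ ↦ hS n

lemma TotallyBounded.exists_finite_image_dist_lt {α : Type*} [PseudoMetricSpace α] {K : Set α}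
    (hK : TotallyBounded K) {δ : ℝ} (hδ : 0 < δ) :
    ∃ f : α → α, (f '' K).Finite ∧ ∀ z ∈ K, dist z (f z) < δ := by
  obtain ⟨T, hT, hKT⟩ := Metric.totallyBounded_iff.1 hK δ hδ
  have hnear : ∀ z, ∃ t, z ∈ K → t ∈ T ∧ dist z t < δ := fun z ↦ by
    by_cases hz : z ∈ K
    · obtain ⟨t, ht, hzt⟩ := mem_iUnion₂.1 (hKT hz)
      exact ⟨t, fun _ ↦ ⟨ht, hzt⟩⟩
    · exact ⟨z, fun h ↦ absurd h hz⟩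
  choose f hf using hnear
  exact ⟨f, hT.subset (image_subset_iff.2 fun z hz ↦ (hf z hz).1), fun z hz ↦ (hf z hz).2⟩

lemma TotallyBounded.exists_seq_finite_image_dist_lt {α : Type*} [PseudoMetricSpace α]
    {K : Set α} (hK : TotallyBounded K) {a : α} {δ : ℕ → ℝ} (hδ : ∀ n, 0 < δ n)
    (hKa : K ⊆ ball a (δ 0)) :
    ∃ u : ℕ → α → α, (∀ n, (u n '' K).Finite) ∧ (∀ z, u 0 z = a) ∧
      ∀ n, ∀ z ∈ K, dist z (u n z) < δ n := by
  choose f hf_fin hf_dist using fun n ↦ hK.exists_finite_image_dist_lt (hδ (n + 1))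
  refine ⟨fun | 0 => fun _ ↦ a | n + 1 => f n, ?_, fun _ ↦ rfl, ?_⟩
  · rintro (_ | n)
    · exact (finite_singleton a).subset (image_subset_iff.2 fun _ _ ↦ rfl)
    · exact hf_fin n
  · rintro (_ | n) z hz
    · exact hKa hz
    · exact hf_dist n z hz

lemma two_pow_succ_mul_add_four_inv_pow (R : ℝ) (n : ℕ) :
    (2 : ℝ) ^ (n + 1) * (R * 4⁻¹ ^ (n + 1) + R * 4⁻¹ ^ n) = 5 / 2 * R * 2⁻¹ ^ n := by
  have h2 : (2 : ℝ) ^ n * 2⁻¹ ^ n = 1 := by rw [← mul_pow]; norm_num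
  have h4 : (4⁻¹ : ℝ) ^ n = 2⁻¹ ^ n * 2⁻¹ ^ n := by rw [← mul_pow]; norm_num
  rw [pow_succ, pow_succ, h4]
  linear_combination (5 / 2 * R * 2⁻¹ ^ n) * h2

theorem exists_finite_tendsto_smallSets_subset_closure_convexHull_of_totallyBounded
    {E : Type*} [SeminormedAddCommGroup E] [NormedSpace ℝ E] {K : Set E}
    (hK : TotallyBounded K) :
    ∃ W : ℕ → Set E, (∀ n, (W n).Finite) ∧ Tendsto W atTop (𝓝 0).smallSets ∧
      K ⊆ closure (convexHull ℝ (insert 0 (⋃ n, W n))) := by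
  obtain ⟨R, hR, hKR⟩ := hK.isBounded.subset_ball_lt 0 0
  set δ : ℕ → ℝ := fun n ↦ R * 4⁻¹ ^ n
  obtain ⟨u, hu_fin, hu0, hu_dist⟩ :=
    hK.exists_seq_finite_image_dist_lt (δ := δ) (fun n ↦ by positivity) (by simpa [δ] using hKR)
  set W : ℕ → Set E := fun n ↦ (fun z ↦ (2 : ℝ) ^ (n + 1) • (u (n + 1) z - u n z)) '' K
  have hW_norm : ∀ n, W n ⊆ closedBall 0 (5 / 2 * R * 2⁻¹ ^ n) := by
    rintro n _ ⟨z, hz, rfl⟩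
    rw [mem_closedBall_zero_iff, norm_smul, ← two_pow_succ_mul_add_four_inv_pow, ← dist_eq_norm,
      Real.norm_of_nonneg (by positivity)]
    gcongr
    exact (dist_triangle_left _ _ z).trans
      (add_le_add (hu_dist (n + 1) z hz).le (hu_dist n z hz).le)
  have hr : Tendsto (fun n : ℕ ↦ 5 / 2 * R * 2⁻¹ ^ n) atTop (𝓝 0) := by
    simpa using (tendsto_pow_atTop_nhds_zero_of_lt_one (r := (2⁻¹ : ℝ)) (by norm_num)
      (by norm_num)).const_mul (5 / 2 * R)
  refine ⟨W, fun n ↦ ?_, ?_, fun z hz ↦ ?_⟩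
  · exact ((hu_fin (n + 1)).image2 (fun a b ↦ (2 : ℝ) ^ (n + 1) • (a - b)) (hu_fin n)).subset
      (image_subset_iff.2 fun z hz ↦
        mem_image2_of_mem (mem_image_of_mem _ hz) (mem_image_of_mem _ hz))
  · exact ((tendsto_closedBall_smallSets 0).comp hr).smallSets_mono (Eventually.of_forall hW_norm)
  · refine mem_closure_convexHull_of_tendsto (u := fun n ↦ u n z) (mem_insert 0 _) ?_ (hu0 z)
      fun n ↦ mem_insert_of_mem 0 (mem_iUnion.2 ⟨n, z, hz, rfl⟩)
    rw [tendsto_iff_dist_tendsto_zero]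
    refine squeeze_zero (fun _ ↦ dist_nonneg)
      (fun n ↦ (dist_comm _ _).trans_le (hu_dist n z hz).le) ?_
    simpa [δ] using (tendsto_pow_atTop_nhds_zero_of_lt_one (r := (4⁻¹ : ℝ)) (by norm_num)
      (by norm_num)).const_mul R

lemma Filter.Tendsto.isCompact_closure_convexHull_range {E : Type*} [AddCommGroup E]
    [Module ℝ E] [UniformSpace E] [IsUniformAddGroup E] [LocallyConvexSpace ℝ E]
    [ContinuousSMul ℝ E] [CompleteSpace E] {x : ℕ → E} {a : E} (hx : Tendsto x atTop (𝓝 a)) :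
    IsCompact (closure (convexHull ℝ (range x))) :=
  (totallyBounded_convexHull.2 (hx.isCompact_insert_range.totallyBounded.subset
    (subset_insert a _))).closure.isCompact_of_isClosed isClosed_closure

/-- In a complex Banach space, a set `K` is compact iff it is closed and contained in the
closed convex hull of the set of terms of some null sequence. -/
theorem isCompact_iff_subset_closure_convexHull_of_null_seq
    (X : Type*) [NormedAddCommGroup X] [NormedSpace ℂ X] [CompleteSpace X] (K : Set X) :
    IsCompact K ↔
      IsClosed K ∧ ∃ x : ℕ → X, Tendsto x atTop (nhds 0) ∧
        K ⊆ closure (convexHull ℝ (Set.range x)) := by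
  constructor
  · intro hK
    obtain ⟨W, hW_fin, hW_lim, hKW⟩ :=
      exists_finite_tendsto_smallSets_subset_closure_convexHull_of_totallyBounded
        hK.totallyBounded
    obtain ⟨x, hx, hWx⟩ := exists_seq_tendsto_insert_iUnion_subset_range hW_fin hW_lim
    exact ⟨hK.isClosed, x, hx, hKW.trans (closure_mono (convexHull_mono hWx))⟩
  · rintro ⟨hK_closed, x, hx, hKx⟩
    exact hx.isCompact_closure_convexHull_range.of_isClosed_subset hK_closed hKx
end

section
/- Let X be a complex Banach space and K ⊆ X. Then K is compact if and only if K is closed and there exists a sequence (xᵢ) in X with xᵢ → 0 such that K is contained in the closure of the set of all finite absolutely convex combinations { Σ_{i ∈ F} τᵢ xᵢ : F ⊆ ℕ finite, τᵢ ∈ ℂ, Σ_{i ∈ F} |τᵢ| ≤ 1 }. -/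
/-!
If `x` is a null sequence, its absolutely convex combinations lie in the real convex hull of
the compact set `{c • y | ‖c‖ ≤ 1, y ∈ insert 0 (range x)}`, so they form a totally bounded
set, whose closure is compact since `X` is complete.

Conversely (Grothendieck), take finite `4⁻ⁿ`-nets of `K` and approximate `k ∈ K` by net points
`pₙ`. Then `k` is the sum of the increments `p₀, p₁ - p₀, p₂ - p₁, …`, which range over finite
sets `Aₙ` whose elements have norm at most `4⁻⁽ⁿ⁻¹⁾ + 4⁻ⁿ` for `n ≥ 1`. The vectors `2ⁿ⁺¹ • a`,
`a ∈ Aₙ`, still tend to `0`, and `∑ₙ pₙ₊₁ - pₙ = ∑ₙ 2⁻⁽ⁿ⁺¹⁾ • (2ⁿ⁺¹ • (pₙ₊₁ - pₙ))` is an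
absolutely convex combination of them because `∑ₙ 2⁻⁽ⁿ⁺¹⁾ ≤ 1`.
-/

open Filter Topology Function Set Pointwise

section

variable {𝕜 E ι κ : Type*}

theorem Convex.sum_smul_mem_of_zero_mem {R : Type*} [Field R] [LinearOrder R]
    [IsStrictOrderedRing R] [AddCommGroup E] [Module R E] {s : Set E} (hs : Convex R s)
    (h0 : (0 : E) ∈ s) {t : Finset ι} {w : ι → R} {z : ι → E} (hw₀ : ∀ i ∈ t, 0 ≤ w i)
    (hw₁ : ∑ i ∈ t, w i ≤ 1) (hz : ∀ i ∈ t, z i ∈ s) : ∑ i ∈ t, w i • z i ∈ s := by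
  -- the missing weight `1 - ∑ i ∈ t, w i` is put on the point `0`
  have key := hs.sum_mem (t := Finset.insertNone t) (w := fun o => o.elim (1 - ∑ i ∈ t, w i) w)
    (z := fun o => o.elim 0 z) ?_ ?_ ?_
  · simpa [Finset.sum_insertNone] using key
  · rintro (_ | i) hi
    · simpa using hw₁
    · exact hw₀ i (by simpa using hi)
  · simp [Finset.sum_insertNone]
  · rintro (_ | i) hi
    · exact h0
    · exact hz i (by simpa using hi)

theorem tendsto_sigma_fst_cofinite_atTop {A : ℕ → Type*} [∀ n, Finite (A n)] :
    Tendsto (Sigma.fst : (Σ n, A n) → ℕ) cofinite atTop := by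
  rw [← Nat.cofinite_eq_atTop]
  refine Tendsto.cofinite_of_finite_preimage_singleton fun n => ?_
  refine ((finite_range (Sigma.mk n)).subset ?_).to_subtype
  rintro ⟨m, a⟩ rfl
  exact ⟨a, rfl⟩

theorem Filter.Tendsto.extend_zero_cofinite [TopologicalSpace E] [Zero E] {y : ι → E}
    (hy : Tendsto y cofinite (𝓝 0)) {f : ι → κ} (hf : Injective f) :
    Tendsto (extend f y 0) cofinite (𝓝 0) := by
  intro U hU
  refine (hy hU).image f |>.subset fun j hj => ?_
  by_cases hjf : ∃ i, f i = j
  · obtain ⟨i, rfl⟩ := hjf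
    exact ⟨i, by simpa [hf.extend_apply] using hj, rfl⟩
  · exact absurd (by simpa [extend_apply' _ _ _ hjf] using mem_of_mem_nhds hU) hj

theorem IsCompact.exists_finsets_tendsto_sum [SeminormedAddCommGroup E] {K : Set E}
    (hK : IsCompact K) {ε : ℕ → ℝ} (hε : ∀ n, 0 < ε n) (hε₀ : Tendsto ε atTop (𝓝 0)) :
    ∃ A : ℕ → Finset E, (∀ n, ∀ a ∈ A (n + 1), ‖a‖ ≤ ε n + ε (n + 1)) ∧
      ∀ k ∈ K, ∃ e : ℕ → E, (∀ n, e n ∈ A n) ∧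
        Tendsto (fun N => ∑ n ∈ Finset.range N, e n) atTop (𝓝 k) := by
  classical
  choose net _ hnet using fun n =>
    hK.elim_nhds_subcover (fun y => Metric.ball y (ε n)) fun y _ => Metric.ball_mem_nhds y (hε n)
  refine ⟨fun
    | 0 => net 0
    | n + 1 => (net (n + 1) - net n).filter fun a => ‖a‖ ≤ ε n + ε (n + 1),
    fun n a ha => (Finset.mem_filter.mp ha).2, fun k hk => ?_⟩
  have hnear : ∀ n, ∃ p ∈ net n, dist k p < ε n := fun n => by
    simpa [Metric.mem_ball, dist_comm] using hnet n hk
  choose p hp hkp using hnear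
  let e : ℕ → E := fun
    | 0 => p 0
    | n + 1 => p (n + 1) - p n
  have hpartial : ∀ N, ∑ n ∈ Finset.range (N + 1), e n = p N := by
    intro N
    induction N with
    | zero => simp [e]
    | succ N ih => rw [Finset.sum_range_succ, ih, add_sub_cancel]
  refine ⟨e, ?_, ?_⟩
  · rintro (_ | n)
    · exact hp 0
    · refine Finset.mem_filter.mpr ⟨Finset.sub_mem_sub (hp _) (hp _), ?_⟩
      calc ‖p (n + 1) - p n‖ = dist (p (n + 1)) (p n) := (dist_eq_norm _ _).symm
        _ ≤ dist k (p (n + 1)) + dist k (p n) := dist_triangle_left _ _ _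
        _ ≤ ε n + ε (n + 1) := by linarith [hkp n, hkp (n + 1)]
  · have hp_tendsto : Tendsto p atTop (𝓝 k) :=
      tendsto_iff_dist_tendsto_zero.mpr <| squeeze_zero (fun _ => dist_nonneg)
        (fun n => (dist_comm (p n) k).trans_le (hkp n).le) hε₀
    rw [← tendsto_add_atTop_iff_nat 1]
    simpa only [hpartial] using hp_tendsto

theorem RCLike.norm_smul_div_norm_smul [RCLike 𝕜] [AddCommGroup E] [Module 𝕜 E] [Module ℝ E]
    [IsScalarTower ℝ 𝕜 E] (c : 𝕜) (v : E) : ‖c‖ • ((c / ‖c‖) • v) = c • v := by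
  rcases eq_or_ne c 0 with rfl | hc
  · simp
  · rw [← smul_assoc, RCLike.real_smul_eq_coe_mul, mul_div_cancel₀ _ (by simpa using hc)]

variable (𝕜) in
def absConvexCombinations [Norm 𝕜] [SMul 𝕜 E] [AddCommMonoid E] (x : ι → E) : Set E :=
  {v | ∃ (F : Finset ι) (τ : ι → 𝕜), ∑ i ∈ F, ‖τ i‖ ≤ 1 ∧ v = ∑ i ∈ F, τ i • x i}

theorem absConvexCombinations_comp_subset [SeminormedAddGroup 𝕜] [AddCommMonoid E]
    [SMulZeroClass 𝕜 E] {x : ι → E} {g : κ → ι} (hg : Injective g) :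
    absConvexCombinations 𝕜 (x ∘ g) ⊆ absConvexCombinations 𝕜 x := by
  rintro v ⟨F, τ, hτ, rfl⟩
  exact ⟨F.map ⟨g, hg⟩, extend g τ 0, by simpa [hg.extend_apply] using hτ,
    by simp [hg.extend_apply]⟩

theorem Filter.Tendsto.exists_seq_absConvexCombinations_superset [SeminormedAddGroup 𝕜]
    [TopologicalSpace E] [AddCommMonoid E] [SMulZeroClass 𝕜 E] [Countable ι] {y : ι → E}
    (hy : Tendsto y cofinite (𝓝 0)) :
    ∃ x : ℕ → E, Tendsto x atTop (𝓝 0) ∧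
      absConvexCombinations 𝕜 y ⊆ absConvexCombinations 𝕜 x := by
  obtain ⟨f, hf⟩ := Countable.exists_injective_nat ι
  refine ⟨extend f y 0, Nat.cofinite_eq_atTop ▸ hy.extend_zero_cofinite hf, ?_⟩
  simpa only [extend_comp hf] using
    absConvexCombinations_comp_subset (𝕜 := 𝕜) (x := extend f y 0) hf

section RCLike

variable [RCLike 𝕜]

theorem absConvexCombinations_subset_convexHull [AddCommGroup E] [Module 𝕜 E] [Module ℝ E]
    [IsScalarTower ℝ 𝕜 E] (x : ι → E) :
    absConvexCombinations 𝕜 x ⊆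
      convexHull ℝ (Metric.closedBall (0 : 𝕜) 1 • insert 0 (range x)) := by
  rintro v ⟨F, τ, hτ, rfl⟩
  have hzero : (0 : E) ∈ Metric.closedBall (0 : 𝕜) 1 • insert 0 (range x) := by
    simpa using Set.smul_mem_smul (Metric.mem_closedBall_self (x := (0 : 𝕜)) zero_le_one)
      (mem_insert 0 (range x))
  simp_rw [← RCLike.norm_smul_div_norm_smul (τ _)]
  refine (convex_convexHull ℝ _).sum_smul_mem_of_zero_mem (subset_convexHull ℝ _ hzero)
    (fun _ _ => norm_nonneg _) hτ fun i _ => subset_convexHull ℝ _ (Set.smul_mem_smul ?_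
      (mem_insert_of_mem _ (mem_range_self i)))
  rcases eq_or_ne (τ i) 0 with h | h
  · simp [h]
  · simp [norm_div, h]

theorem Filter.Tendsto.totallyBounded_absConvexCombinations [SeminormedAddCommGroup E]
    [NormedSpace 𝕜 E] [NormedSpace ℝ E] [IsScalarTower ℝ 𝕜 E] {x : ι → E}
    (hx : Tendsto x cofinite (𝓝 0)) : TotallyBounded (absConvexCombinations 𝕜 x) :=
  ((isCompact_closedBall 0 1).smul_set hx.isCompact_insert_range_of_cofinite).totallyBounded
    |>.convexHull.subset (absConvexCombinations_subset_convexHull x)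

variable (𝕜) [SeminormedAddCommGroup E] [NormedSpace 𝕜 E]

def dyadicScaling (A : ℕ → Finset E) (p : Σ n, A n) : E :=
  (2 : 𝕜) ^ (p.1 + 1) • (p.2 : E)

variable {𝕜}

theorem sum_range_mem_absConvexCombinations_dyadicScaling {A : ℕ → Finset E} {e : ℕ → E}
    (he : ∀ n, e n ∈ A n) (N : ℕ) :
    ∑ n ∈ Finset.range N, e n ∈ absConvexCombinations 𝕜 (dyadicScaling 𝕜 A) := by
  let g : ℕ → Σ n, A n := fun n => ⟨n, e n, he n⟩
  have hg : Injective g := fun m n h => congrArg Sigma.fst h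
  refine absConvexCombinations_comp_subset hg
    ⟨Finset.range N, fun n => (2 : 𝕜)⁻¹ ^ (n + 1), ?_, ?_⟩
  · simp only [norm_pow, norm_inv, RCLike.norm_two]
    simp only [pow_succ, ← Finset.sum_mul]
    have := sum_geometric_two_le N
    rw [one_div] at this
    linarith
  · refine Finset.sum_congr rfl fun n _ => ?_
    simp only [comp_apply, dyadicScaling, g, smul_smul, ← mul_pow]
    simp

theorem tendsto_dyadicScaling {A : ℕ → Finset E} {r : ℕ → ℝ}
    (hA : ∀ n, ∀ a ∈ A (n + 1), ‖a‖ ≤ r n)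
    (hr : Tendsto (fun n => (2 : ℝ) ^ (n + 2) * r n) atTop (𝓝 0)) :
    Tendsto (dyadicScaling 𝕜 A) cofinite (𝓝 0) := by
  let bound : ℕ → ℝ := fun n => (2 : ℝ) ^ (n + 1) * r (n - 1)
  have hbound : Tendsto bound atTop (𝓝 0) := (tendsto_add_atTop_iff_nat 1).mp hr
  refine squeeze_zero_norm' ?_ (hbound.comp tendsto_sigma_fst_cofinite_atTop)
  filter_upwards [tendsto_sigma_fst_cofinite_atTop.eventually_ne_atTop 0]
  rintro ⟨_ | n, a, ha⟩ hn
  · exact absurd rfl hn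
  · simp only [dyadicScaling, norm_smul, norm_pow, RCLike.norm_two, comp_apply, bound]
    exact mul_le_mul_of_nonneg_left (hA n a ha) (by positivity)

theorem IsCompact.exists_tendsto_subset_closure_absConvexCombinations {K : Set E}
    (hK : IsCompact K) :
    ∃ x : ℕ → E, Tendsto x atTop (𝓝 0) ∧ K ⊆ closure (absConvexCombinations 𝕜 x) := by
  obtain ⟨A, hA, hK_sum⟩ := hK.exists_finsets_tendsto_sum (ε := fun n => (4 : ℝ)⁻¹ ^ n)
    (fun n => by positivity) (tendsto_pow_atTop_nhds_zero_of_lt_one (by norm_num) (by norm_num))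
  have hscale : ∀ n : ℕ, (2 : ℝ) ^ (n + 2) * ((4 : ℝ)⁻¹ ^ n + (4 : ℝ)⁻¹ ^ (n + 1))
      = 5 * (2 : ℝ)⁻¹ ^ n := by
    intro n
    induction n with
    | zero => norm_num
    | succ n ih => linear_combination (2 : ℝ)⁻¹ * ih
  have hr : Tendsto (fun n => (2 : ℝ) ^ (n + 2) * ((4 : ℝ)⁻¹ ^ n + (4 : ℝ)⁻¹ ^ (n + 1)))
      atTop (𝓝 0) := by
    simp only [hscale]
    simpa using (tendsto_pow_atTop_nhds_zero_of_lt_one (r := (2 : ℝ)⁻¹) (by norm_num)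
      (by norm_num)).const_mul 5
  obtain ⟨x, hx, hsub⟩ :=
    (tendsto_dyadicScaling (𝕜 := 𝕜) hA hr).exists_seq_absConvexCombinations_superset (𝕜 := 𝕜)
  refine ⟨x, hx, fun k hk => ?_⟩
  obtain ⟨e, he, hek⟩ := hK_sum k hk
  exact closure_mono hsub <| mem_closure_of_tendsto hek <|
    Eventually.of_forall (sum_range_mem_absConvexCombinations_dyadicScaling he)

end RCLike

end

/-- In a complex Banach space, a set `K` is compact iff it is closed and contained in the
closure of the set of finite absolutely convex combinations of the terms of some null
sequence. -/
theorem isCompact_iff_subset_closure_absConvexComb_of_null_seq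
    (X : Type*) [NormedAddCommGroup X] [NormedSpace ℂ X] [CompleteSpace X] (K : Set X) :
    IsCompact K ↔
      IsClosed K ∧ ∃ x : ℕ → X, Tendsto x atTop (nhds 0) ∧
        K ⊆ closure {v : X | ∃ (F : Finset ℕ) (τ : ℕ → ℂ),
          (∑ i ∈ F, ‖τ i‖) ≤ 1 ∧ v = ∑ i ∈ F, τ i • x i} := by
  refine ⟨fun hK => ⟨hK.isClosed, hK.exists_tendsto_subset_closure_absConvexCombinations⟩, ?_⟩
  rintro ⟨hK, x, hx, hKx⟩
  have hx' : Tendsto x cofinite (𝓝 0) := Nat.cofinite_eq_atTop ▸ hx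
  exact (hx'.totallyBounded_absConvexCombinations (𝕜 := ℂ)).closure.isCompact_of_isClosed
    isClosed_closure |>.of_isClosed_subset hK hKx
end

section
/- Let X be a normed space over ℂ and K ⊆ X. Then K is totally bounded if and only if K is bounded and for every ε > 0 there exists a finite-dimensional subspace V_ε ⊆ X such that every point of K lies within distance ε of some point of V_ε. -/
/-!
A totally bounded set has finite `ε`-nets, and the span of a net is a finite-dimensional subspace
approximating the set. Conversely, if `K` is bounded and lies within `ε` of a finite-dimensional
subspace `V`, then it lies within `ε` of the bounded set `V ∩ cthickening ε K`; bounded subsets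
of `V` are relatively compact since `V` is proper, so `K` is within `ε` of a totally bounded set
for every `ε`, which forces `K` to be totally bounded.
-/

open Metric Bornology

theorem Metric.totallyBounded_of_forall_exists_totallyBounded_dist_le {α : Type*}
    [PseudoMetricSpace α] {s : Set α}
    (h : ∀ ε > 0, ∃ t : Set α, TotallyBounded t ∧ ∀ x ∈ s, ∃ y ∈ t, dist x y ≤ ε) :
    TotallyBounded s := by
  refine totallyBounded_iff.2 fun ε hε => ?_
  obtain ⟨t, ht, hst⟩ := h (ε / 2) (half_pos hε)
  obtain ⟨u, hu, htu⟩ := totallyBounded_iff.1 ht (ε / 2) (half_pos hε)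
  refine ⟨u, hu, fun x hx => ?_⟩
  obtain ⟨y, hyt, hxy⟩ := hst x hx
  obtain ⟨z, hzu, hyz⟩ := Set.mem_iUnion₂.1 (htu hyt)
  refine Set.mem_iUnion₂.2 ⟨z, hzu, ?_⟩
  calc dist x z ≤ dist x y + dist y z := dist_triangle x y z
    _ < ε / 2 + ε / 2 := add_lt_add_of_le_of_lt hxy hyz
    _ = ε := add_halves ε

theorem TotallyBounded.exists_finiteDimensional_norm_sub_le {𝕜 E : Type*} [NormedField 𝕜]
    [NormedAddCommGroup E] [NormedSpace 𝕜 E] {K : Set E} (hK : TotallyBounded K)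
    {ε : ℝ} (hε : 0 < ε) :
    ∃ V : Submodule 𝕜 E, FiniteDimensional 𝕜 V ∧ ∀ x ∈ K, ∃ v ∈ V, ‖x - v‖ ≤ ε := by
  obtain ⟨t, ht, hKt⟩ := totallyBounded_iff.1 hK ε hε
  refine ⟨Submodule.span 𝕜 t, FiniteDimensional.span_of_finite 𝕜 ht, fun x hx => ?_⟩
  obtain ⟨y, hyt, hxy⟩ := Set.mem_iUnion₂.1 (hKt hx)
  exact ⟨y, Submodule.subset_span hyt, (mem_ball_iff_norm.1 hxy).le⟩

theorem Submodule.totallyBounded_of_isBounded_of_subset {𝕜 E : Type*}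
    [NontriviallyNormedField 𝕜] [LocallyCompactSpace 𝕜] [NormedAddCommGroup E] [NormedSpace 𝕜 E]
    (V : Submodule 𝕜 E) [FiniteDimensional 𝕜 V] {s : Set E} (hs : IsBounded s)
    (hsV : s ⊆ V) : TotallyBounded s := by
  have : ProperSpace V := FiniteDimensional.proper 𝕜 V
  have hs' : IsBounded (((↑) : V → E) ⁻¹' s) :=
    isometry_subtype_coe.antilipschitz.isBounded_preimage hs
  have := (hs'.isCompact_closure.totallyBounded.subset subset_closure).image
    uniformContinuous_subtype_val
  rwa [Set.image_preimage_eq_of_subset (by simpa using hsV)] at this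

/-- In a complex normed space, a set `K` is totally bounded iff it is bounded and for
every `ε > 0` there is a finite-dimensional subspace `V_ε` such that every point of `K`
lies within distance `ε` of some point of `V_ε`. -/
theorem totallyBounded_iff_bounded_and_finiteDimensional_approx
    (X : Type*) [NormedAddCommGroup X] [NormedSpace ℂ X] (K : Set X) :
    TotallyBounded K ↔
      Bornology.IsBounded K ∧ ∀ ε : ℝ, 0 < ε →
        ∃ V : Submodule ℂ X, FiniteDimensional ℂ V ∧
          ∀ x ∈ K, ∃ v ∈ V, ‖x - v‖ ≤ ε := by
  constructor
  · intro hK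
    exact ⟨hK.isBounded, fun ε hε => hK.exists_finiteDimensional_norm_sub_le hε⟩
  · rintro ⟨hK, happrox⟩
    refine totallyBounded_of_forall_exists_totallyBounded_dist_le fun ε hε => ?_
    obtain ⟨V, hV, hKV⟩ := happrox ε hε
    have hT : TotallyBounded ((V : Set X) ∩ cthickening ε K) :=
      V.totallyBounded_of_isBounded_of_subset (hK.cthickening.subset Set.inter_subset_right)
        Set.inter_subset_left
    refine ⟨_, hT, fun x hx => ?_⟩
    obtain ⟨v, hvV, hxv⟩ := hKV x hx
    have hxv' : dist x v ≤ ε := by rwa [dist_eq_norm]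
    exact ⟨v, ⟨hvV, mem_cthickening_of_dist_le v x ε K hx ((dist_comm v x).trans_le hxv')⟩, hxv'⟩
end

section
/- For every finite-dimensional normed space V over ℂ and every ε > 0, there exist n ∈ ℕ and a subspace W of ℓ¹_n such that the quotient space ℓ¹_n / W is (1 + ε)-isomorphic to V; that is, there exists a continuous linear equivalence φ : ℓ¹_n / W → V with ‖φ‖ · ‖φ⁻¹‖ < 1 + ε. -/
/-!
Let `x₁, …, xₙ` be a `δ`-net of the unit sphere of `V` and `T : ℓ¹_n → V` the map `eᵢ ↦ xᵢ`,
so `‖T‖ ≤ 1`. By Riesz's lemma the net spans `V`, so `T` induces an isomorphism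
`φ : ℓ¹_n / ker T → V` with `‖φ‖ ≤ 1`. Every unit vector `u` is within `δ` of some `xᵢ = φ [eᵢ]`,
and `φ⁻¹ u = [eᵢ] + φ⁻¹ (u - xᵢ)` gives `‖φ⁻¹‖ ≤ 1 + δ ‖φ⁻¹‖`, i.e. `‖φ⁻¹‖ ≤ (1 - δ)⁻¹`.
-/

open Metric

theorem exists_fin_net_unit_sphere {F : Type*} [NormedAddCommGroup F] [ProperSpace F]
    {δ : ℝ} (hδ : 0 < δ) :
    ∃ (n : ℕ) (x : Fin n → F), (∀ i, ‖x i‖ = 1) ∧ ∀ u : F, ‖u‖ = 1 → ∃ i, ‖u - x i‖ < δ := by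
  obtain ⟨t, hts, htfin, htcov⟩ := (isCompact_sphere (0 : F) 1).finite_cover_balls hδ
  obtain ⟨n, x, rfl⟩ := htfin.fin_embedding
  refine ⟨n, x, fun i ↦ by simpa using hts ⟨i, rfl⟩, fun u hu ↦ ?_⟩
  obtain ⟨_, ⟨i, rfl⟩, hi⟩ := Set.mem_iUnion₂.mp (htcov (mem_sphere_zero_iff_norm.mpr hu))
  exact ⟨i, by rwa [← dist_eq_norm]⟩

section

variable {𝕜 F : Type*} [RCLike 𝕜] [NormedAddCommGroup F] [NormedSpace 𝕜 F]

theorem Submodule.span_eq_top_of_unit_sphere_approx [FiniteDimensional 𝕜 F] {s : Set F}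
    {δ : ℝ} (hδ : δ < 1) (hs : ∀ u : F, ‖u‖ = 1 → ∃ x ∈ s, ‖u - x‖ < δ) :
    span 𝕜 s = ⊤ := by
  by_contra hne
  obtain ⟨u, -, hu, hfar⟩ := riesz_lemma_of_lt_one (span 𝕜 s).closed_of_finiteDimensional
    (by simpa [Submodule.eq_top_iff'] using hne) hδ
  obtain ⟨x, hxs, hx⟩ := hs u hu
  exact (hfar x (subset_span hxs)).not_gt hx

theorem ContinuousLinearEquiv.norm_symm_le_of_unit_sphere_approx {G : Type*}
    [SeminormedAddCommGroup G] [NormedSpace 𝕜 G] (φ : G ≃L[𝕜] F) {δ : ℝ} (hδ₀ : 0 ≤ δ)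
    (hδ : δ < 1) (h : ∀ u : F, ‖u‖ = 1 → ∃ g, ‖g‖ ≤ 1 ∧ ‖u - φ g‖ ≤ δ) :
    ‖(φ.symm : F →L[𝕜] G)‖ ≤ (1 - δ)⁻¹ := by
  set M := ‖(φ.symm : F →L[𝕜] G)‖
  have hM : M ≤ 1 + δ * M := by
    refine ContinuousLinearMap.opNorm_le_of_unit_norm (by positivity) fun u hu ↦ ?_
    obtain ⟨g, hg, hug⟩ := h u hu
    have hsplit : φ.symm u = g + φ.symm (u - φ g) := by
      rw [map_sub, symm_apply_apply, add_sub_cancel]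
    calc ‖(φ.symm : F →L[𝕜] G) u‖ = ‖g + (φ.symm : F →L[𝕜] G) (u - φ g)‖ := by
          rw [coe_coe, hsplit]
      _ ≤ ‖g‖ + M * ‖u - φ g‖ := norm_add_le_of_le le_rfl ((φ.symm : F →L[𝕜] G).le_opNorm _)
      _ ≤ 1 + M * δ := by gcongr
      _ = 1 + δ * M := by ring
  rw [← one_div, le_div_iff₀ (sub_pos.mpr hδ)]
  linarith

variable {ι : Type*} [Fintype ι]

noncomputable def l1Combination (x : ι → F) : PiLp 1 (fun _ : ι => 𝕜) →L[𝕜] F :=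
  LinearMap.toContinuousLinearMap ((PiLp.basisFun 1 𝕜 ι).constr 𝕜 x)

theorem l1Combination_apply (x : ι → F) (a : PiLp 1 (fun _ : ι => 𝕜)) :
    l1Combination x a = ∑ i, a i • x i := by
  simp [l1Combination, Module.Basis.constr_apply_fintype]

theorem l1Combination_single [DecidableEq ι] (x : ι → F) (i : ι) :
    l1Combination x (PiLp.single 1 i (1 : 𝕜)) = x i := by
  rw [← PiLp.basisFun_apply]
  exact (PiLp.basisFun 1 𝕜 ι).constr_basis 𝕜 x i

theorem l1Combination_surjective {x : ι → F} (hx : Submodule.span 𝕜 (Set.range x) = ⊤) :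
    Function.Surjective (l1Combination (𝕜 := 𝕜) x) := by
  unfold l1Combination
  have : LinearMap.range ((PiLp.basisFun 1 𝕜 ι).constr 𝕜 x) = ⊤ :=
    (Module.Basis.constr_range _ _).trans hx
  exact LinearMap.range_eq_top.mp this

theorem norm_l1Combination_le {x : ι → F} (hx : ∀ i, ‖x i‖ ≤ 1) :
    ‖l1Combination (𝕜 := 𝕜) x‖ ≤ 1 := by
  refine ContinuousLinearMap.opNorm_le_bound _ zero_le_one fun a ↦ ?_
  rw [l1Combination_apply, one_mul, PiLp.norm_eq_of_L1]
  refine (norm_sum_le _ _).trans (Finset.sum_le_sum fun i _ ↦ ?_)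
  rw [norm_smul]
  exact mul_le_of_le_one_right (norm_nonneg _) (hx i)

end

section

variable {𝕜 E F : Type*} [NontriviallyNormedField 𝕜] [CompleteSpace 𝕜]
  [NormedAddCommGroup E] [NormedSpace 𝕜 E] [NormedAddCommGroup F] [NormedSpace 𝕜 F]
  [FiniteDimensional 𝕜 E]

theorem ContinuousLinearMap.exists_quotKer_equiv (T : E →L[𝕜] F) (hT : Function.Surjective T) :
    ∃ φ : (E ⧸ T.ker) ≃L[𝕜] F,
      ‖(φ : (E ⧸ T.ker) →L[𝕜] F)‖ ≤ ‖T‖ ∧ ∀ a, φ (Submodule.Quotient.mk a) = T a := by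
  have : IsClosed (T.ker : Set E) := T.ker.closed_of_finiteDimensional
  refine ⟨((T : E →ₗ[𝕜] F).quotKerEquivOfSurjective hT).toContinuousLinearEquiv,
    ContinuousLinearMap.opNorm_le_bound _ (norm_nonneg _) fun q ↦ ?_, fun a ↦ rfl⟩
  obtain ⟨a, rfl⟩ := Submodule.mkQ_surjective _ q
  let f := (T : E →ₗ[𝕜] F).toAddMonoidHom.mkNormedAddGroupHom ‖T‖ T.le_opNorm
  calc ‖T a‖ ≤ ‖f‖ * ‖(Submodule.Quotient.mk a : E ⧸ T.ker)‖ :=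
        QuotientAddGroup.norm_lift_apply_le f (fun x hx ↦ hx) (Submodule.Quotient.mk a)
    _ ≤ ‖T‖ * ‖(Submodule.Quotient.mk a : E ⧸ T.ker)‖ := by
        gcongr; exact AddMonoidHom.mkNormedAddGroupHom_norm_le _ (norm_nonneg _) _

end

theorem exists_pos_inv_one_sub_lt {ε : ℝ} (hε : 0 < ε) :
    ∃ δ : ℝ, 0 < δ ∧ δ < 1 ∧ (1 - δ)⁻¹ < 1 + ε := by
  set δ := ε / (2 * (1 + ε))
  have hδ₁ : δ < 1 := by rw [div_lt_one (by positivity)]; linarith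
  have hδε : (1 + ε) * (1 - δ) = 1 + ε / 2 := by simp only [δ]; field_simp; ring
  refine ⟨δ, by positivity, hδ₁, ?_⟩
  rw [inv_lt_iff_one_lt_mul₀ (sub_pos.mpr hδ₁), hδε]
  linarith

/-- Every finite-dimensional complex normed space is `(1 + ε)`-isomorphic to a quotient
of some `ℓ¹_n`. -/
theorem exists_quotient_of_l1_close
    (V : Type*) [NormedAddCommGroup V] [NormedSpace ℂ V] [FiniteDimensional ℂ V]
    (ε : ℝ) (hε : 0 < ε) :
    ∃ (n : ℕ) (W : Submodule ℂ (PiLp 1 (fun _ : Fin n => ℂ)))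
      (φ : (PiLp 1 (fun _ : Fin n => ℂ) ⧸ W) ≃L[ℂ] V),
        ‖(φ : (PiLp 1 (fun _ : Fin n => ℂ) ⧸ W) →L[ℂ] V)‖ *
          ‖(φ.symm : V →L[ℂ] (PiLp 1 (fun _ : Fin n => ℂ) ⧸ W))‖ < 1 + ε := by
  obtain ⟨δ, hδ₀, hδ₁, hδε⟩ := exists_pos_inv_one_sub_lt hε
  obtain ⟨n, x, hx, hnet⟩ := exists_fin_net_unit_sphere (F := V) hδ₀
  have hspan : Submodule.span ℂ (Set.range x) = ⊤ :=
    Submodule.span_eq_top_of_unit_sphere_approx hδ₁ fun u hu ↦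
      let ⟨i, hi⟩ := hnet u hu; ⟨x i, Set.mem_range_self i, hi⟩
  set T : PiLp 1 (fun _ : Fin n => ℂ) →L[ℂ] V := l1Combination x
  obtain ⟨φ, hφ, hφT⟩ := T.exists_quotKer_equiv (l1Combination_surjective hspan)
  refine ⟨n, T.ker, φ, ?_⟩
  have hφsymm : ‖(φ.symm : V →L[ℂ] PiLp 1 (fun _ : Fin n => ℂ) ⧸ T.ker)‖ ≤ (1 - δ)⁻¹ := by
    refine φ.norm_symm_le_of_unit_sphere_approx hδ₀.le hδ₁ fun u hu ↦ ?_
    obtain ⟨i, hi⟩ := hnet u hu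
    refine ⟨Submodule.Quotient.mk (PiLp.single 1 i 1), ?_, ?_⟩
    · exact (Submodule.Quotient.norm_mk_le _ _).trans (by simp)
    · rw [hφT, l1Combination_single]; exact hi.le
  calc _ ≤ 1 * (1 - δ)⁻¹ :=
        mul_le_mul (hφ.trans (norm_l1Combination_le (le_of_eq <| hx ·))) hφsymm
          (ContinuousLinearMap.opNorm_nonneg _) zero_le_one
    _ < 1 + ε := by rwa [one_mul]
end
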